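/- arXiv:1807.08547 — 2 statements merged into one kernel-verified Lean document; each statement's English description precedes it below -/
import Mathlib

section
/- Fix s ≥ 1, Δt ∈ ℝ, multistep coefficients a = (a_0,…,a_{s-1}) ∈ ℝ^s and b = (b_{-1},b_0,…,b_{s-1}) ∈ ℝ^{s+1}, a C¹ map f : ℝ^n × ℝ^m → ℝ^n, sequences (y_k) in ℝ^n, (u_k) in ℝ^m and (p_k) in ℝ^n, and an index n. Define the discretize-then-optimize update R_d := −Σ_{i=0}^{s-1} a_i p_{n+i} + Δt f_y(y_{n-1},u_{n-1})ᵀ Σ_{i=-1}^{s-1} b_i p_{n+i}, and the optimize-then-discretize update R_c := −Σ_{i=0}^{s-1} a_i p_{n+i} + Δt Σ_{i=-1}^{s-1} b_i f_y(y_{n+i-1},u_{n+i-1})ᵀ p_{n+i}. Then R_d − R_c = Δt Σ_{i=-1}^{s-1} b_i ( f_y(y_{n-1},u_{n-1}) − f_y(y_{n+i-1},u_{n+i-1}) )ᵀ p_{n+i}, and in this sum the term with i = 0 vanishes identically. In particular, if b_i ≠ 0 for some i ∈ {−1} ∪ {1,…,s−1}, the two updates agree for all choices of (y,u,p) only when the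 corresponding Jacobian differences annihilate p_{n+i}. -/
open ContinuousLinearMap

theorem ContinuousLinearMap.map_sum_smul_sub_sum_smul_apply {R M N ι : Type*} [Ring R]
    [TopologicalSpace M] [AddCommGroup M] [Module R M]
    [TopologicalSpace N] [AddCommGroup N] [Module R N] [IsTopologicalAddGroup N]
    (s : Finset ι) (L : M →L[R] N) (K : ι → M →L[R] N) (c : ι → R) (v : ι → M) :
    L (∑ i ∈ s, c i • v i) - ∑ i ∈ s, c i • K i (v i) = ∑ i ∈ s, c i • (L - K i) (v i) := by
  simp only [map_sum, map_smul, ← Finset.sum_sub_distrib, ← smul_sub, sub_apply]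

theorem stmt_3_general (s : ℕ) (n' : ℕ) (Δt : ℝ)
    (a : Fin s → ℝ) (b : Fin (s + 1) → ℝ)
    (p : ℤ → EuclideanSpace ℝ (Fin n')) (n : ℤ)
    (fy : ℤ → (EuclideanSpace ℝ (Fin n') →L[ℝ] EuclideanSpace ℝ (Fin n')))
    (Rd Rc : EuclideanSpace ℝ (Fin n'))
    (hRd : Rd = -(∑ i : Fin s, a i • p (n + (i : ℕ))) +
        Δt • (adjoint (fy (n - 1)))
          (∑ j : Fin (s + 1), b j • p (n + (j : ℕ) - 1)))
    (hRc : Rc = -(∑ i : Fin s, a i • p (n + (i : ℕ))) +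
        Δt • ∑ j : Fin (s + 1),
          b j • (adjoint (fy (n + (j : ℕ) - 2))) (p (n + (j : ℕ) - 1))) :
    (Rd - Rc = Δt • ∑ j : Fin (s + 1),
        b j • (adjoint (fy (n - 1) - fy (n + (j : ℕ) - 2))) (p (n + (j : ℕ) - 1))) ∧
    (∀ j : Fin (s + 1), (j : ℕ) = 1 →
      b j • (adjoint (fy (n - 1) - fy (n + (j : ℕ) - 2))) (p (n + (j : ℕ) - 1)) = 0) ∧
    (Rd = Rc → Δt • ∑ j : Fin (s + 1),
        b j • (adjoint (fy (n - 1) - fy (n + (j : ℕ) - 2))) (p (n + (j : ℕ) - 1)) = 0) := by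
  have discrepancy : Rd - Rc = Δt • ∑ j : Fin (s + 1),
      b j • (adjoint (fy (n - 1) - fy (n + (j : ℕ) - 2))) (p (n + (j : ℕ) - 1)) := by
    simp only [hRd, hRc, add_sub_add_left_eq_sub, ← smul_sub, map_sub,
      map_sum_smul_sub_sum_smul_apply]
  refine ⟨discrepancy, fun j hj => ?_, fun h => ?_⟩
  · have same_index : n + (j : ℕ) - 2 = n - 1 := by rw [hj]; ring
    rw [same_index, sub_self, map_zero, zero_apply, smul_zero]
  · rw [← discrepancy, h, sub_self]

/-- discrepancy between the discretize-then-optimize adjoint update `R_d`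
and the optimize-then-discretize adjoint update `R_c` for a general linear multistep
method.  Here `b j` stands for `b_{j-1}` (so `j = i + 1` for `i = -1,…,s-1`),
`fy k = f_y(y_k, u_k)` is the partial Jacobian (as a Fréchet derivative) and the
transpose is the Hilbert-space adjoint on `EuclideanSpace`. -/
theorem stmt_3 (s : ℕ) (hs : 1 ≤ s) (n' m' : ℕ) (Δt : ℝ)
    (a : Fin s → ℝ) (b : Fin (s + 1) → ℝ)
    (f : EuclideanSpace ℝ (Fin n') → EuclideanSpace ℝ (Fin m') → EuclideanSpace ℝ (Fin n'))
    (hf : ContDiff ℝ 1 (Function.uncurry f))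
    (y : ℤ → EuclideanSpace ℝ (Fin n')) (u : ℤ → EuclideanSpace ℝ (Fin m'))
    (p : ℤ → EuclideanSpace ℝ (Fin n')) (n : ℤ)
    (fy : ℤ → (EuclideanSpace ℝ (Fin n') →L[ℝ] EuclideanSpace ℝ (Fin n')))
    (hfy : ∀ k : ℤ, fy k = fderiv ℝ (fun z => f z (u k)) (y k))
    (Rd Rc : EuclideanSpace ℝ (Fin n'))
    (hRd : Rd = -(∑ i : Fin s, a i • p (n + (i : ℕ))) +
        Δt • (adjoint (fy (n - 1)))
          (∑ j : Fin (s + 1), b j • p (n + (j : ℕ) - 1)))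
    (hRc : Rc = -(∑ i : Fin s, a i • p (n + (i : ℕ))) +
        Δt • ∑ j : Fin (s + 1),
          b j • (adjoint (fy (n + (j : ℕ) - 2))) (p (n + (j : ℕ) - 1))) :
    (Rd - Rc = Δt • ∑ j : Fin (s + 1),
        b j • (adjoint (fy (n - 1) - fy (n + (j : ℕ) - 2))) (p (n + (j : ℕ) - 1))) ∧
    (∀ j : Fin (s + 1), (j : ℕ) = 1 →
      b j • (adjoint (fy (n - 1) - fy (n + (j : ℕ) - 2))) (p (n + (j : ℕ) - 1)) = 0) ∧
    (Rd = Rc → Δt • ∑ j : Fin (s + 1),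
        b j • (adjoint (fy (n - 1) - fy (n + (j : ℕ) - 2))) (p (n + (j : ℕ) - 1)) = 0) :=
  stmt_3_general s n' Δt a b p n fy Rd Rc hRd hRc
end

section
/- Fix positive integers N and s, real numbers ε ≠ 0, Δt, b_{-1}, coefficients a_0,…,a_{s-1} ∈ ℝ, weights w_1,…,w_N ∈ ℝ with Σ_{j=1}^N w_j = 1, real numbers λ^1,…,λ^N (the values at the new time level), real numbers L_{j,i} for j = 1,…,N and i = 0,…,s−1 (the known values at later time levels), and Z ∈ ℝ. Suppose Z = Σ_{j=1}^N w_j λ^j and, for each j, λ^j + Σ_{i=0}^{s-1} a_i L_{j,i} = −(Δt b_{-1}/ε)( λ^j − Z ). Then Z = −Σ_{j=1}^N Σ_{i=0}^{s-1} w_j a_i L_{j,i}. -/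
/-! Multiplying the `j`-th update by `w j` and summing over `j`, the relaxation terms add up to
`c * (∑ w j λ^j - Z * ∑ w j) = c * (Z - Z) = 0` because the weights sum to one, while the
left-hand sides add up to `Z + ∑ j, w j * ∑ i, a i * L j i`. -/

open Finset

section WeightedMean

variable {ι R : Type*} [CommRing R] (s : Finset ι) (w x : ι → R)

theorem sum_mul_sub_weightedSum_eq_zero (hw : ∑ j ∈ s, w j = 1) :
    ∑ j ∈ s, w j * (x j - ∑ k ∈ s, w k * x k) = 0 := by
  simp only [mul_sub, sum_sub_distrib, ← sum_mul, hw, one_mul, sub_self]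

theorem weightedSum_eq_neg_of_add_eq_mul_sub (r : ι → R) (c Z : R)
    (hw : ∑ j ∈ s, w j = 1) (hZ : Z = ∑ j ∈ s, w j * x j)
    (h : ∀ j ∈ s, x j + r j = c * (x j - Z)) :
    Z = -∑ j ∈ s, w j * r j := by
  have hsum : ∑ j ∈ s, w j * (x j + r j) = c * ∑ j ∈ s, w j * (x j - Z) := by
    rw [mul_sum]
    exact sum_congr rfl fun j hj => by rw [h j hj]; ring
  rw [hZ, sum_mul_sub_weightedSum_eq_zero s w x hw, mul_zero] at hsum
  simp only [mul_add, sum_add_distrib] at hsum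
  rw [hZ]
  linear_combination hsum

end WeightedMean

theorem stmt_14_general (N s : ℕ)
    (ε Δt bm1 : ℝ)
    (a : Fin s → ℝ) (w : Fin N → ℝ) (hw : ∑ j, w j = 1)
    (lam : Fin N → ℝ) (L : Fin N → Fin s → ℝ) (Z : ℝ)
    (hZ : Z = ∑ j, w j * lam j)
    (hup : ∀ j, lam j + ∑ i, a i * L j i = -(Δt * bm1 / ε) * (lam j - Z)) :
    Z = -∑ j, ∑ i, w j * (a i * L j i) := by
  simp only [← mul_sum]
  exact weightedSum_eq_neg_of_add_eq_mul_sub univ w lam _ _ Z hw hZ fun j _ => hup j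

/-- algebraic elimination of the implicit source term in the semi-Lagrangian
BDF scheme for the adjoint relaxation equations.  If `Z = Σ_j w_j λ^j` with `Σ_j w_j = 1`
and each `λ^j` satisfies the implicit BDF update, then `Z = −Σ_j Σ_i w_j a_i L_{j,i}`. -/
theorem stmt_14 (N s : ℕ) (hN : 0 < N) (hs : 0 < s)
    (ε Δt bm1 : ℝ) (hε : ε ≠ 0)
    (a : Fin s → ℝ) (w : Fin N → ℝ) (hw : ∑ j, w j = 1)
    (lam : Fin N → ℝ) (L : Fin N → Fin s → ℝ) (Z : ℝ)
    (hZ : Z = ∑ j, w j * lam j)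
    (hup : ∀ j, lam j + ∑ i, a i * L j i = -(Δt * bm1 / ε) * (lam j - Z)) :
    Z = -∑ j, ∑ i, w j * (a i * L j i) :=
  stmt_14_general N s ε Δt bm1 a w hw lam L Z hZ hup
end
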